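/- Reduction of linear cut to spent cut via decomposition: for every persistent context Θ, every focused context Ψ, every multiset of negative formulas Γ, and every positive formula P, if the focused sequent ⊨ Θ : Ψ,[P] is derivable in LLM, then there exists a spent context Σ such that ⊨ Θ : Σ,[P] is derivable and, whenever the focused sequent ⊨ Θ : Σ,Γ is derivable, so is the focused sequent ⊨ Θ : Ψ,Γ; consequently, admissibility of the spent cut rule (with first premise of the form ⊨ Θ : Σ,[P], Σ spent) implies admissibility of the general linear cut rule (with first premise ⊨ Θ : Ψ,[P]). -/
import Mathlib


mutual
inductive PForm (α : Type) : Type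
  | atom  : α → PForm α
  | one   : PForm α
  | tens  : PForm α → PForm α → PForm α
  | zero  : PForm α
  | plus  : PForm α → PForm α → PForm α
  | bang  : NForm α → PForm α
  | up    : NForm α → PForm α

inductive NForm (α : Type) : Type
  | natom : α → NForm α
  | bot   : NForm α
  | parr  : NForm α → NForm α → NForm α
  | top   : NForm α
  | wth   : NForm α → NForm α → NForm α
  | quest : PForm α → NForm α
  | down  : PForm α → NForm α
end

mutual
def PForm.dual {α : Type} : PForm α → NForm α
  | .atom a   => .natom a
  | .one      => .bot
  | .tens P Q => .parr P.dual Q.dual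
  | .zero     => .top
  | .plus P Q => .wth P.dual Q.dual
  | .bang N   => .quest N.dual
  | .up N     => .down N.dual

def NForm.dual {α : Type} : NForm α → PForm α
  | .natom a  => .atom a
  | .bot      => .one
  | .parr N M => .tens N.dual M.dual
  | .top      => .zero
  | .wth N M  => .plus N.dual M.dual
  | .quest P  => .bang P.dual
  | .down P   => .up P.dual
end

/-- Items of a focused context: negative formulas or foci `[P]`. -/
inductive FItem (α : Type) : Type
  | neg : NForm α → FItem α
  | foc : PForm α → FItem α

/-- Sequents of LLM: inversion sequents `⊢ Θ : Γ` and focusing sequents `⊨ Θ : Ψ`. -/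
inductive LLMSeq (α : Type) : Type
  | inv : Multiset (PForm α) → Multiset (NForm α) → LLMSeq α
  | foc : Multiset (PForm α) → Multiset (FItem α) → LLMSeq α

/-- A multiset of negatives seen as a focused context. -/
def negCtx {α : Type} (Γ : Multiset (NForm α)) : Multiset (FItem α) :=
  Γ.map FItem.neg

/-- A multiset of positives seen as a focused context entirely made of foci. -/
def focCtx {α : Type} (Θ : Multiset (PForm α)) : Multiset (FItem α) :=
  Θ.map FItem.foc

/-- The rules of the multifocused sequent calculus LLM. -/
inductive LLM {α : Type} : LLMSeq α → Prop
  | ax (Θ : Multiset (PForm α)) (a : α) :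
      LLM (.foc Θ {FItem.neg (.natom a), FItem.foc (.atom a)})
  | one (Θ : Multiset (PForm α)) :
      LLM (.foc Θ {FItem.foc .one})
  | tens {Θ : Multiset (PForm α)} {Ψ Ξ : Multiset (FItem α)} {P Q : PForm α} :
      LLM (.foc Θ (FItem.foc P ::ₘ Ψ)) → LLM (.foc Θ (FItem.foc Q ::ₘ Ξ)) →
      LLM (.foc Θ (FItem.foc (P.tens Q) ::ₘ (Ψ + Ξ)))
  | plusL {Θ : Multiset (PForm α)} {Ψ : Multiset (FItem α)} {P : PForm α} (Q : PForm α) :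
      LLM (.foc Θ (FItem.foc P ::ₘ Ψ)) → LLM (.foc Θ (FItem.foc (P.plus Q) ::ₘ Ψ))
  | plusR {Θ : Multiset (PForm α)} {Ψ : Multiset (FItem α)} {Q : PForm α} (P : PForm α) :
      LLM (.foc Θ (FItem.foc Q ::ₘ Ψ)) → LLM (.foc Θ (FItem.foc (P.plus Q) ::ₘ Ψ))
  | bang {Θ : Multiset (PForm α)} {N : NForm α} :
      LLM (.inv Θ {N}) → LLM (.foc Θ {FItem.foc (.bang N)})
  | up {Θ : Multiset (PForm α)} {Γ : Multiset (NForm α)} (Δ : Multiset (NForm α))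
      (hΔ : Δ ≠ 0) :
      LLM (.inv Θ (Γ + Δ)) →
      LLM (.foc Θ (negCtx Γ + Δ.map (fun N => FItem.foc (.up N))))
  | down {Θ : Multiset (PForm α)} {Γ : Multiset (NForm α)} (Θn Θ' : Multiset (PForm α))
      (hcopy : ∀ P ∈ Θn, P ∈ Θ) (hne : Θn ≠ 0 ∨ Θ' ≠ 0) :
      LLM (.foc Θ (focCtx Θn + negCtx Γ + focCtx Θ')) →
      LLM (.inv Θ (Γ + Θ'.map NForm.down))
  | bot {Θ : Multiset (PForm α)} {Γ : Multiset (NForm α)} :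
      LLM (.inv Θ Γ) → LLM (.inv Θ (NForm.bot ::ₘ Γ))
  | parr {Θ : Multiset (PForm α)} {Γ : Multiset (NForm α)} {N M : NForm α} :
      LLM (.inv Θ (N ::ₘ M ::ₘ Γ)) → LLM (.inv Θ (NForm.parr N M ::ₘ Γ))
  | top (Θ : Multiset (PForm α)) (Γ : Multiset (NForm α)) :
      LLM (.inv Θ (NForm.top ::ₘ Γ))
  | wth {Θ : Multiset (PForm α)} {Γ : Multiset (NForm α)} {N M : NForm α} :
      LLM (.inv Θ (N ::ₘ Γ)) → LLM (.inv Θ (M ::ₘ Γ)) →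
      LLM (.inv Θ (NForm.wth N M ::ₘ Γ))
  | quest {Θ : Multiset (PForm α)} {Γ : Multiset (NForm α)} {P : PForm α} :
      LLM (.inv (P ::ₘ Θ) Γ) → LLM (.inv Θ (NForm.quest P ::ₘ Γ))

/-- A focused context is spent when every focus it contains is of the form `[⇑N]`. -/
def Spent {α : Type} (S : Multiset (FItem α)) : Prop :=
  ∀ P : PForm α, FItem.foc P ∈ S → ∃ N : NForm α, P = PForm.up N


private lemma LLM.use_self {α : Type} {Θ : Multiset (PForm α)} {P : PForm α}
    {Ψ : Multiset (FItem α)} (hsp : Spent Ψ)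
    (h : LLM (.foc Θ (FItem.foc P ::ₘ Ψ))) :
    ∃ S, Spent S ∧ LLM (.foc Θ (FItem.foc P ::ₘ S)) ∧
      ∀ Ξ, LLM (.foc Θ (S + Ξ)) → LLM (.foc Θ (Ψ + Ξ)) :=
  ⟨Ψ, hsp, h, fun _ => id⟩

theorem LLM.decomp {α : Type} {s : LLMSeq α} (h : LLM s) :
    ∀ (Θ : Multiset (PForm α)) (P : PForm α) (Ψ : Multiset (FItem α)),
      s = .foc Θ (FItem.foc P ::ₘ Ψ) →
      ∃ S : Multiset (FItem α), Spent S ∧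
        LLM (.foc Θ (FItem.foc P ::ₘ S)) ∧
        ∀ Ξ, LLM (.foc Θ (S + Ξ)) → LLM (.foc Θ (Ψ + Ξ)) := by
  induction h with
  | @ax Θ0 a =>
    intro Θ P Ψ heq
    injection heq with hΘ hctx
    subst hΘ
    have hP : FItem.foc P ∈
        ({FItem.neg (.natom a), FItem.foc (.atom a)} : Multiset (FItem α)) := by
      rw [hctx]; exact Multiset.mem_cons_self _ _
    have hP' : P = PForm.atom a := by simpa using hP
    subst hP'
    rw [Multiset.pair_comm] at hctx
    have hΨ : Ψ = {FItem.neg (.natom a)} :=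
      ((Multiset.cons_inj_right _).mp hctx).symm
    subst hΨ
    refine LLM.use_self ?_ ?_
    · intro Q hQ
      simp at hQ
    · show LLM (.foc Θ0 ({FItem.foc (PForm.atom a), FItem.neg (NForm.natom a)} : Multiset (FItem α)))
      rw [Multiset.pair_comm]
      exact LLM.ax Θ0 a
  | @one Θ0 =>
    intro Θ P Ψ heq
    injection heq with hΘ hctx
    subst hΘ
    rw [Multiset.singleton_eq_cons_iff] at hctx
    obtain ⟨h1, h2⟩ := hctx
    injection h1 with h1
    subst h1; subst h2
    exact LLM.use_self (fun Q hQ => absurd hQ (by simp)) (LLM.one Θ0)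
  | @tens Θ0 Ψ1 Ψ2 Q1 Q2 h1 h2 ih1 ih2 =>
    intro Θ P Ψ heq
    injection heq with hΘ hctx
    subst hΘ
    rcases Multiset.cons_eq_cons.mp hctx with ⟨hP, hΨ⟩ | ⟨hne, cs, hs, ht⟩
    · injection hP with hP
      subst hP; subst hΨ
      obtain ⟨S1, sp1, d1, imp1⟩ := ih1 Θ0 Q1 Ψ1 rfl
      obtain ⟨S2, sp2, d2, imp2⟩ := ih2 Θ0 Q2 Ψ2 rfl
      refine ⟨S1 + S2, ?_, LLM.tens d1 d2, ?_⟩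
      · intro Q hQ
        rcases Multiset.mem_add.mp hQ with hQ | hQ
        · exact sp1 Q hQ
        · exact sp2 Q hQ
      · intro Ξ hx
        have e1 : S1 + S2 + Ξ = S1 + (S2 + Ξ) := by abel
        rw [e1] at hx
        have hx2 := imp1 (S2 + Ξ) hx
        have e2 : Ψ1 + (S2 + Ξ) = S2 + (Ψ1 + Ξ) := by abel
        rw [e2] at hx2
        have hx3 := imp2 (Ψ1 + Ξ) hx2
        have e3 : Ψ2 + (Ψ1 + Ξ) = Ψ1 + Ψ2 + Ξ := by abel
        rw [e3] at hx3
        exact hx3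
    · subst ht
      have hPmem : FItem.foc P ∈ Ψ1 + Ψ2 := by
        rw [hs]; exact Multiset.mem_cons_self _ _
      rcases Multiset.mem_add.mp hPmem with hPm | hPm
      · obtain ⟨Ψ1', rfl⟩ := Multiset.exists_cons_of_mem hPm
        rw [Multiset.cons_add] at hs
        have hcs : cs = Ψ1' + Ψ2 := ((Multiset.cons_inj_right _).mp hs).symm
        subst hcs
        obtain ⟨S, sp, d, imp⟩ := ih1 Θ0 P (FItem.foc Q1 ::ₘ Ψ1')
          (by rw [Multiset.cons_swap])
        refine ⟨S, sp, d, ?_⟩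
        intro Ξ hx
        have hx2 := imp Ξ hx
        rw [Multiset.cons_add] at hx2
        have hx3 := LLM.tens hx2 h2
        have e : FItem.foc (Q1.tens Q2) ::ₘ (Ψ1' + Ξ + Ψ2)
            = FItem.foc (Q1.tens Q2) ::ₘ (Ψ1' + Ψ2) + Ξ := by
          rw [Multiset.cons_add]
          congr 1
          abel
        rw [e] at hx3
        exact hx3
      · obtain ⟨Ψ2', rfl⟩ := Multiset.exists_cons_of_mem hPm
        rw [Multiset.add_cons] at hs
        have hcs : cs = Ψ1 + Ψ2' := ((Multiset.cons_inj_right _).mp hs).symm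
        subst hcs
        obtain ⟨S, sp, d, imp⟩ := ih2 Θ0 P (FItem.foc Q2 ::ₘ Ψ2')
          (by rw [Multiset.cons_swap])
        refine ⟨S, sp, d, ?_⟩
        intro Ξ hx
        have hx2 := imp Ξ hx
        rw [Multiset.cons_add] at hx2
        have hx3 := LLM.tens h1 hx2
        have e : FItem.foc (Q1.tens Q2) ::ₘ (Ψ1 + (Ψ2' + Ξ))
            = FItem.foc (Q1.tens Q2) ::ₘ (Ψ1 + Ψ2') + Ξ := by
          rw [Multiset.cons_add]
          congr 1
          abel
        rw [e] at hx3
        exact hx3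
  | @plusL Θ0 Ψ0 Q1 Q2 h1 ih1 =>
    intro Θ P Ψ heq
    injection heq with hΘ hctx
    subst hΘ
    rcases Multiset.cons_eq_cons.mp hctx with ⟨hP, hΨ⟩ | ⟨hne, cs, hs, ht⟩
    · injection hP with hP
      subst hP; subst hΨ
      obtain ⟨S, sp, d, imp⟩ := ih1 Θ0 Q1 Ψ0 rfl
      exact ⟨S, sp, LLM.plusL Q2 d, imp⟩
    · subst ht; subst hs
      obtain ⟨S, sp, d, imp⟩ := ih1 Θ0 P (FItem.foc Q1 ::ₘ cs)
        (by rw [Multiset.cons_swap])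
      refine ⟨S, sp, d, ?_⟩
      intro Ξ hx
      have hx2 := imp Ξ hx
      rw [Multiset.cons_add] at hx2
      have hx3 := LLM.plusL Q2 hx2
      rw [← Multiset.cons_add] at hx3
      exact hx3
  | @plusR Θ0 Ψ0 Q2 Q1 h1 ih1 =>
    intro Θ P Ψ heq
    injection heq with hΘ hctx
    subst hΘ
    rcases Multiset.cons_eq_cons.mp hctx with ⟨hP, hΨ⟩ | ⟨hne, cs, hs, ht⟩
    · injection hP with hP
      subst hP; subst hΨ
      obtain ⟨S, sp, d, imp⟩ := ih1 Θ0 Q2 Ψ0 rfl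
      exact ⟨S, sp, LLM.plusR Q1 d, imp⟩
    · subst ht; subst hs
      obtain ⟨S, sp, d, imp⟩ := ih1 Θ0 P (FItem.foc Q2 ::ₘ cs)
        (by rw [Multiset.cons_swap])
      refine ⟨S, sp, d, ?_⟩
      intro Ξ hx
      have hx2 := imp Ξ hx
      rw [Multiset.cons_add] at hx2
      have hx3 := LLM.plusR Q1 hx2
      rw [← Multiset.cons_add] at hx3
      exact hx3
  | @bang Θ0 N h1 ih1 =>
    intro Θ P Ψ heq
    injection heq with hΘ hctx
    subst hΘ
    rw [Multiset.singleton_eq_cons_iff] at hctx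
    obtain ⟨hp, hq⟩ := hctx
    injection hp with hp
    subst hp; subst hq
    exact LLM.use_self (fun Q hQ => absurd hQ (by simp)) (LLM.bang h1)
  | @up Θ0 Γ0 Δ hΔ h1 ih1 =>
    intro Θ P Ψ heq
    injection heq with hΘ hctx
    subst hΘ
    refine LLM.use_self ?_ (by rw [← hctx]; exact LLM.up Δ hΔ h1)
    intro Q hQ
    have hQ' : FItem.foc Q ∈ negCtx Γ0 + Δ.map (fun N => FItem.foc (.up N)) := by
      rw [hctx]
      exact Multiset.mem_cons_of_mem hQ
    rcases Multiset.mem_add.mp hQ' with hm | hm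
    · obtain ⟨N, _, hN⟩ := Multiset.mem_map.mp hm
      exact absurd hN (by simp)
    · obtain ⟨N, _, hN⟩ := Multiset.mem_map.mp hm
      injection hN with hN
      exact ⟨N, hN.symm⟩
  | down _ _ _ _ _ _ => exact fun _ _ _ h => nomatch h
  | bot _ _ => exact fun _ _ _ h => nomatch h
  | parr _ _ => exact fun _ _ _ h => nomatch h
  | top _ _ => exact fun _ _ _ h => nomatch h
  | wth _ _ _ _ => exact fun _ _ _ h => nomatch h
  | quest _ _ => exact fun _ _ _ h => nomatch h

/-- Reduction of the linear cut to the spent cut via the decomposition lemma. -/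
theorem cut_reduces_to_scut {α : Type} :
    (∀ (Θ : Multiset (PForm α)) (Ψ : Multiset (FItem α)) (Γ : Multiset (NForm α))
        (P : PForm α),
      LLM (.foc Θ (FItem.foc P ::ₘ Ψ)) →
      ∃ S : Multiset (FItem α), Spent S ∧
        LLM (.foc Θ (FItem.foc P ::ₘ S)) ∧
        (LLM (.foc Θ (S + negCtx Γ)) → LLM (.foc Θ (Ψ + negCtx Γ)))) ∧
    ((∀ (Θ : Multiset (PForm α)) (S : Multiset (FItem α)) (Γ : Multiset (NForm α))
        (P : PForm α),
      Spent S →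
      LLM (.foc Θ (FItem.foc P ::ₘ S)) →
      LLM (.inv Θ (P.dual ::ₘ Γ)) →
      LLM (.foc Θ (S + negCtx Γ))) →
     (∀ (Θ : Multiset (PForm α)) (Ψ : Multiset (FItem α)) (Γ : Multiset (NForm α))
        (P : PForm α),
      LLM (.foc Θ (FItem.foc P ::ₘ Ψ)) →
      LLM (.inv Θ (P.dual ::ₘ Γ)) →
      LLM (.foc Θ (Ψ + negCtx Γ)))) := by
  constructor
  · intro Θ Ψ Γ P h
    obtain ⟨S, sp, d, imp⟩ := h.decomp Θ P Ψ rfl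
    exact ⟨S, sp, d, imp (negCtx Γ)⟩
  · intro scut Θ Ψ Γ P h1 h2
    obtain ⟨S, sp, d, imp⟩ := h1.decomp Θ P Ψ rfl
    exact imp (negCtx Γ) (scut Θ S Γ P sp d h2)
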